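/- arXiv:2101.01330 — 10 statements merged into one kernel-verified Lean document; each statement's English description precedes it below -/
import Mathlib

section
/- Let p : [0, τ] → ℝ solve p'(t) = κ(γ_T(δ(t)) − p(t)) with p(0) = p₀. Then for every t ∈ [0, τ], p(t) = p₀ e^{−κt} + G(t) − e^{−κt} G(0). -/
/-! With `s = -δ(t)/T`, which increases at the constant rate `a = ε/(τT)`, the series `G(t)`
is `F(s) = -∑ (-eˢ)ⁿ⁺¹ / ((n+1)c + 1)` with `c = a/κ`. Differentiating termwise gives
`c F' + F = -∑ (-eˢ)ⁿ⁺¹ = sigmoid s`, i.e. `G' = κ (γ_T(δ) - G)`: `G` is a particular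
solution of the relaxation equation. Adding the homogeneous solution `(p₀ - G 0) e^{-κt}`
fixes the initial value, and uniqueness for this Lipschitz ODE identifies the result with `p`. -/

open Set

/-- The series `G(t) = -∑_{n=1}^∞ (-exp(-δ(t)/T))^n / (nε/(κτT) + 1)` with the linear
downward driving `δ(t) = δmax - (ε/τ) t`. -/
noncomputable def Gfun (T δmax ε κ τ : ℝ) (t : ℝ) : ℝ :=
  -∑' n : ℕ, (-Real.exp (-(δmax - ε / τ * t) / T)) ^ (n + 1) /
      ((n + 1 : ℝ) * ε / (κ * τ * T) + 1)

open Real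

noncomputable def laggedSigmoid (c s : ℝ) : ℝ :=
  -∑' n : ℕ, (-exp s) ^ (n + 1) / ((n + 1) * c + 1)

lemma sigmoid_eq_neg_tsum {s : ℝ} (hs : s < 0) :
    sigmoid s = -∑' n : ℕ, (-exp s) ^ (n + 1) := by
  have hnorm : ‖-exp s‖ < 1 := by
    rwa [norm_neg, norm_of_nonneg (exp_pos s).le, exp_lt_one_iff]
  simp_rw [pow_succ']
  rw [tsum_mul_left, tsum_geometric_of_norm_lt_one hnorm, sigmoid_def, exp_neg, sub_neg_eq_add]
  have : 1 + exp s ≠ 0 := by positivity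
  field_simp
  ring

lemma summable_succ_mul_pow_succ {r : ℝ} (hr₀ : 0 ≤ r) (hr₁ : r < 1) :
    Summable fun n : ℕ => ((n : ℝ) + 1) * r ^ (n + 1) := by
  have h := summable_pow_mul_geometric_of_norm_lt_one (R := ℝ) 1
    (by rwa [norm_of_nonneg hr₀])
  simpa using (summable_nat_add_iff 1).mpr h

lemma norm_neg_exp_pow_div_le {d : ℝ} (hd : 1 ≤ d) (n : ℕ) (y : ℝ) :
    ‖(-exp y) ^ (n + 1) / d‖ ≤ exp y ^ (n + 1) := by
  rw [norm_div, norm_pow, norm_neg, norm_of_nonneg (exp_pos y).le, norm_of_nonneg (by linarith)]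
  exact div_le_self (by positivity) hd

lemma hasDerivAt_neg_exp_pow_div (n : ℕ) (d y : ℝ) :
    HasDerivAt (fun y => (-exp y) ^ (n + 1) / d) ((n + 1) * ((-exp y) ^ (n + 1) / d)) y := by
  refine (((hasDerivAt_exp y).neg.pow (n + 1)).div_const d).congr_deriv ?_
  simp only [Pi.neg_apply]
  push_cast
  ring

lemma hasDerivAt_laggedSigmoid {c s : ℝ} (hc : 0 < c) (hs : s < 0) :
    HasDerivAt (laggedSigmoid c) ((sigmoid s - laggedSigmoid c s) / c) s := by
  set u : ℕ → ℝ → ℝ := fun n y => (-exp y) ^ (n + 1) / ((n + 1) * c + 1)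
  set r := exp (s / 2)
  have hs' : s ∈ Iio (s / 2) := by simp only [mem_Iio]; linarith
  have hu_le (n : ℕ) (y : ℝ) (hy : y ∈ Iio (s / 2)) : ‖u n y‖ ≤ r ^ (n + 1) :=
    (norm_neg_exp_pow_div_le (by nlinarith) n y).trans (by gcongr; exact exp_le_exp.2 hy.le)
  have hu'_le (n : ℕ) (y : ℝ) (hy : y ∈ Iio (s / 2)) :
      ‖(n + 1 : ℝ) * u n y‖ ≤ (n + 1) * r ^ (n + 1) := by
    rw [norm_mul, Real.norm_of_nonneg (by positivity)]
    gcongr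
    exact hu_le n y hy
  have hsum := summable_succ_mul_pow_succ (exp_pos _).le (exp_lt_one_iff.2 (by linarith) : r < 1)
  have husum : Summable (u · s) := .of_norm_bounded hsum fun n =>
    (hu_le n s hs').trans (le_mul_of_one_le_left (by positivity) (by simp))
  have hu'sum : Summable fun n : ℕ => (n + 1 : ℝ) * u n s :=
    .of_norm_bounded hsum fun n => hu'_le n s hs'
  have hu (n : ℕ) (y : ℝ) : HasDerivAt (u n) ((n + 1) * u n y) y :=
    hasDerivAt_neg_exp_pow_div n _ y
  have hderiv := (hasDerivAt_tsum_of_isPreconnected hsum isOpen_Iio isPreconnected_Iio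
    (fun n y _ => hu n y) hu'_le hs' husum hs').neg
  have hrelax : c * ∑' n : ℕ, (n + 1 : ℝ) * u n s + ∑' n, u n s
      = ∑' n : ℕ, (-exp s) ^ (n + 1) := by
    rw [← tsum_mul_left, ← (hu'sum.mul_left c).tsum_add husum]
    refine tsum_congr fun n => ?_
    simp only [u]
    field_simp
  have hF : laggedSigmoid c s = -∑' n, u n s := rfl
  refine hderiv.congr_deriv ?_
  rw [sigmoid_eq_neg_tsum hs, hF, ← hrelax]
  field_simp
  ring

lemma Gfun_eq_laggedSigmoid (T δmax ε κ τ t : ℝ) :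
    Gfun T δmax ε κ τ t = laggedSigmoid (ε / (κ * τ * T)) (-(δmax - ε / τ * t) / T) := by
  simp only [Gfun, laggedSigmoid, mul_div_assoc]

lemma hasDerivAt_Gfun {T δmax ε κ τ t : ℝ} (hT : 0 < T) (hε : 0 < ε) (hτ : 0 < τ)
    (hκ : 0 < κ) (ht : 0 < δmax - ε / τ * t) :
    HasDerivAt (Gfun T δmax ε κ τ)
      (κ * (1 / (1 + exp ((δmax - ε / τ * t) / T)) - Gfun T δmax ε κ τ t)) t := by
  have hs : HasDerivAt (fun u => -(δmax - ε / τ * u) / T) (ε / τ / T) t := by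
    simpa using (((hasDerivAt_id t).const_mul (ε / τ)).const_sub δmax).neg.div_const T
  have hF := (hasDerivAt_laggedSigmoid (by positivity : 0 < ε / (κ * τ * T))
    (by rw [neg_div, neg_lt_zero]; positivity)).comp t hs
  rw [funext (Gfun_eq_laggedSigmoid T δmax ε κ τ)]
  refine hF.congr_deriv ?_
  rw [sigmoid_def, neg_div, neg_neg, one_div]
  field_simp

lemma hasDerivAt_const_mul_exp_add {G : ℝ → ℝ} {κ f C t : ℝ}
    (hG : HasDerivAt G (κ * (f - G t)) t) :
    HasDerivAt (fun u => C * exp (-κ * u) + G u) (κ * (f - (C * exp (-κ * t) + G t))) t := by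
  have hexp := ((hasDerivAt_id t).const_mul (-κ)).exp.const_mul C
  refine (hexp.add hG).congr_deriv ?_
  simp only [id]
  ring

lemma eqOn_Icc_of_hasDerivWithinAt_relaxation {κ a b : ℝ} {f p q : ℝ → ℝ}
    (hp : ∀ t ∈ Icc a b, HasDerivWithinAt p (κ * (f t - p t)) (Icc a b) t)
    (hq : ∀ t ∈ Icc a b, HasDerivWithinAt q (κ * (f t - q t)) (Icc a b) t)
    (h : p a = q a) : EqOn p q (Icc a b) := by
  have hLip : ∀ t, LipschitzOnWith ‖κ‖₊ (fun x => κ * (f t - x)) univ := fun t =>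
    (LipschitzWith.of_dist_le_mul fun x y => by
      rw [Real.dist_eq, Real.dist_eq, ← mul_sub, sub_sub_sub_cancel_left, abs_mul, abs_sub_comm,
        coe_nnnorm, norm_eq_abs]).lipschitzOnWith
  refine ODE_solution_unique_of_mem_Icc_right (v := fun t x => κ * (f t - x))
    (s := fun _ => univ)
    (fun t _ => hLip t) (fun t ht => (hp t ht).continuousWithinAt) (fun t ht => ?_)
    (fun _ _ => mem_univ _) (fun t ht => (hq t ht).continuousWithinAt) (fun t ht => ?_)
    (fun _ _ => mem_univ _) h
  · exact (hp t (Ico_subset_Icc_self ht)).mono_of_mem_nhdsWithin (Icc_mem_nhdsGE_of_mem ht)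
  · exact (hq t (Ico_subset_Icc_self ht)).mono_of_mem_nhdsWithin (Icc_mem_nhdsGE_of_mem ht)

theorem stmt2_general (T δmin δmax τ κ p₀ : ℝ)
    (hT : 0 < T) (hmin : 0 < δmin) (hlt : δmin < δmax) (hτ : 0 < τ) (hκ : 0 < κ)
    (p : ℝ → ℝ) (hp0 : p 0 = p₀)
    (hp : ∀ t ∈ Icc (0 : ℝ) τ,
      HasDerivWithinAt p
        (κ * (1 / (1 + Real.exp ((δmax - (δmax - δmin) / τ * t) / T)) - p t))
        (Icc 0 τ) t) :
    ∀ t ∈ Icc (0 : ℝ) τ,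
      p t = p₀ * Real.exp (-κ * t) + Gfun T δmax (δmax - δmin) κ τ t
        - Real.exp (-κ * t) * Gfun T δmax (δmax - δmin) κ τ 0 := by
  set G := Gfun T δmax (δmax - δmin) κ τ
  have hgap : ∀ t ∈ Icc 0 τ, 0 < δmax - (δmax - δmin) / τ * t := fun t ht => by
    have h := mul_le_mul_of_nonneg_left ht.2 (div_pos (sub_pos.2 hlt) hτ).le
    rw [div_mul_cancel₀ _ hτ.ne'] at h
    linarith
  have hq : ∀ t ∈ Icc 0 τ, HasDerivWithinAt (fun u => (p₀ - G 0) * exp (-κ * u) + G u)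
      (κ * (1 / (1 + exp ((δmax - (δmax - δmin) / τ * t) / T))
        - ((p₀ - G 0) * exp (-κ * t) + G t))) (Icc 0 τ) t := fun t ht =>
    (hasDerivAt_const_mul_exp_add
      (hasDerivAt_Gfun hT (sub_pos.2 hlt) hτ hκ (hgap t ht))).hasDerivWithinAt
  intro t ht
  rw [eqOn_Icc_of_hasDerivWithinAt_relaxation hp hq (by simp [hp0]) ht]
  ring

/-- if `p` solves `p' = κ (γ_T(δ(t)) − p)` with `p 0 = p₀`, where
`γ_T(δ) = 1/(1 + exp(δ/T))` and `δ(t) = δmax − (ε/τ) t`, `ε = δmax − δmin`, then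
`p(t) = p₀ e^{−κt} + G(t) − e^{−κt} G(0)` on `[0, τ]`. -/
theorem stmt2 (T δmin δmax τ κ p₀ : ℝ)
    (hT : 0 < T) (hmin : 0 < δmin) (hlt : δmin < δmax) (hτ : 0 < τ) (hκ : 0 < κ)
    (hp₀ : p₀ ∈ Icc (0 : ℝ) 1)
    (p : ℝ → ℝ) (hp0 : p 0 = p₀)
    (hp : ∀ t ∈ Icc (0 : ℝ) τ,
      HasDerivWithinAt p
        (κ * (1 / (1 + Real.exp ((δmax - (δmax - δmin) / τ * t) / T)) - p t))
        (Icc 0 τ) t) :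
    ∀ t ∈ Icc (0 : ℝ) τ,
      p t = p₀ * Real.exp (-κ * t) + Gfun T δmax (δmax - δmin) κ τ t
        - Real.exp (-κ * t) * Gfun T δmax (δmax - δmin) κ τ 0 :=
  stmt2_general T δmin δmax τ κ p₀ hT hmin hlt hτ hκ p hp0 hp
end

section
/- The average-work function M(τ) satisfies lim_{τ → 0⁺} M(τ) = ε p₀, the work output of the corresponding adiabatic process. -/
open Set Filter

/-- `G_τ(u) = -∑_{n=1}^∞ (-exp(-u/T))^n / (nε/(κτT) + 1)`. -/
noncomputable def Gser (T ε κ τ u : ℝ) : ℝ :=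
  -∑' n : ℕ, (-Real.exp (-u / T)) ^ (n + 1) / ((n + 1 : ℝ) * ε / (κ * τ * T) + 1)

/-- The average-work function
`M(τ) = T ln(Z(δmin)/Z(δmax)) + (ε p₀/(κτ))(1 − e^{−κτ}) − (ε/(κτ))(G_τ(δmin) − e^{−κτ} G_τ(δmax))`,
with `Z(δ) = 1 + exp(−δ/T)` and `ε = δmax − δmin`. -/
noncomputable def Mavg (T δmin δmax κ p₀ τ : ℝ) : ℝ :=
  T * Real.log ((1 + Real.exp (-δmin / T)) / (1 + Real.exp (-δmax / T)))
    + (δmax - δmin) * p₀ / (κ * τ) * (1 - Real.exp (-κ * τ))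
    - (δmax - δmin) / (κ * τ) *
        (Gser T (δmax - δmin) κ τ δmin - Real.exp (-κ * τ) * Gser T (δmax - δmin) κ τ δmax)

/-!
As `τ → 0⁺` the prefactor `ε/(κτ)` blows up while `G_τ` vanishes termwise. Rescaling,
`(ε/(κτ)) G_τ(u) = -T ∑ (-x)^(n+1) / (n + 1 + s)` with `x = exp(-u/T)` and `s = κτT/ε → 0⁺`, and
by dominated convergence (the terms are bounded by `x^(n+1)`) this tends to
`-T ∑ (-x)^(n+1)/(n+1) = T log(1 + x)`. Hence the two `G`-terms of `M(τ)` converge to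
`T log Z(δmin) - T log Z(δmax)` and cancel the logarithmic term, while
`(ε p₀/(κτ))(1 - e^{-κτ}) → ε p₀`.
-/

open Real Topology

lemma tendsto_one_sub_exp_neg_div :
    Tendsto (fun s : ℝ => (1 - exp (-s)) / s) (𝓝[≠] 0) (𝓝 1) := by
  have hderiv : HasDerivAt (fun s : ℝ => 1 - exp (-s)) 1 0 := by
    simpa using ((hasDerivAt_neg (0 : ℝ)).exp).const_sub 1
  refine (hasDerivAt_iff_tendsto_slope.mp hderiv).congr fun s => ?_
  simp [slope_def_field]

lemma tendsto_const_mul_nhdsGT_zero {𝕜 : Type*} [Field 𝕜] [LinearOrder 𝕜]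
    [IsStrictOrderedRing 𝕜] [TopologicalSpace 𝕜] [OrderTopology 𝕜] {c : 𝕜} (hc : 0 < c) :
    Tendsto (c * ·) (𝓝[>] 0) (𝓝[>] 0) := by
  have h := tendsto_comap (f := (c * ·)) (x := 𝓝[>] (0 : 𝕜))
  rwa [comap_mulLeft_nhdsGT_zero hc] at h

lemma tendsto_tsum_pow_succ_div_add {y : ℝ} (hy : |y| < 1) :
    Tendsto (fun s : ℝ => ∑' n : ℕ, y ^ (n + 1) / (n + 1 + s)) (𝓝[≥] 0)
      (𝓝 (-log (1 - y))) := by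
  rw [← (hasSum_pow_div_log_of_abs_lt_one hy).tsum_eq]
  refine tendsto_tsum_of_dominated_convergence (bound := fun n : ℕ => |y| ^ (n + 1))
    ((summable_nat_add_iff 1).mpr (summable_geometric_of_lt_one (abs_nonneg y) hy))
    (fun n => ?_) ?_
  · have hcont : ContinuousAt (fun s : ℝ => y ^ (n + 1) / (n + 1 + s)) 0 := by
      fun_prop (disch := positivity)
    simpa using hcont.continuousWithinAt.tendsto
  · filter_upwards [self_mem_nhdsWithin] with s (hs : 0 ≤ s) n
    rw [norm_div, norm_pow, Real.norm_eq_abs, Real.norm_of_nonneg (by positivity)]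
    exact div_le_self (by positivity) (by linarith [n.cast_nonneg (α := ℝ)])

lemma div_mul_Gser_eq {T ε κ τ : ℝ} (hT : 0 < T) (hε : 0 < ε) (hκ : 0 < κ) (hτ : 0 < τ) (u : ℝ) :
    ε / (κ * τ) * Gser T ε κ τ u
      = -T * ∑' n : ℕ, (-exp (-u / T)) ^ (n + 1) / (n + 1 + κ * T / ε * τ) := by
  rw [Gser, mul_neg, neg_mul, ← tsum_mul_left, ← tsum_mul_left]
  congr 1
  refine tsum_congr fun n => ?_
  have hden : 0 < (n + 1 : ℝ) * ε / (κ * τ * T) + 1 := by positivity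
  have hden' : 0 < (n + 1 : ℝ) + κ * T / ε * τ := by positivity
  field_simp

lemma tendsto_div_mul_Gser {T ε κ u : ℝ} (hT : 0 < T) (hε : 0 < ε) (hκ : 0 < κ) (hu : 0 < u) :
    Tendsto (fun τ => ε / (κ * τ) * Gser T ε κ τ u) (𝓝[>] 0)
      (𝓝 (T * log (1 + exp (-u / T)))) := by
  have hx : |-exp (-u / T)| < 1 := by
    rw [abs_neg, abs_of_pos (exp_pos _), Real.exp_lt_one_iff]
    exact div_neg_of_neg_of_pos (neg_neg_of_pos hu) hT
  have hs : Tendsto (fun τ : ℝ => κ * T / ε * τ) (𝓝[>] 0) (𝓝[≥] 0) :=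
    (tendsto_const_mul_nhdsGT_zero (by positivity)).mono_right
      (nhdsWithin_mono _ Ioi_subset_Ici_self)
  have hlim := ((tendsto_tsum_pow_succ_div_add hx).comp hs).const_mul (-T)
  rw [sub_neg_eq_add, mul_neg, neg_mul, neg_neg] at hlim
  refine hlim.congr' ?_
  filter_upwards [self_mem_nhdsWithin] with τ (hτ : 0 < τ)
  exact (div_mul_Gser_eq hT hε hκ hτ u).symm

theorem stmt4_general (T δmin δmax κ p₀ : ℝ)
    (hT : 0 < T) (hmin : 0 < δmin) (hlt : δmin < δmax) (hκ : 0 < κ) :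
    Tendsto (fun τ => Mavg T δmin δmax κ p₀ τ) (nhdsWithin 0 (Ioi 0))
      (nhds ((δmax - δmin) * p₀)) := by
  have hε : 0 < δmax - δmin := sub_pos.mpr hlt
  have hκτ : Tendsto (fun τ => κ * τ) (𝓝[>] 0) (𝓝[≠] 0) :=
    (tendsto_const_mul_nhdsGT_zero hκ).mono_right (nhdsGT_le_nhdsNE 0)
  have hexp : Tendsto (fun τ : ℝ => exp (-κ * τ)) (𝓝[>] 0) (𝓝 1) := by
    have hcont : Continuous fun τ : ℝ => exp (-κ * τ) := by fun_prop
    simpa using (hcont.tendsto 0).mono_left nhdsWithin_le_nhds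
  have hlim := ((tendsto_const_nhds
      (x := T * log (1 + exp (-δmin / T)) - T * log (1 + exp (-δmax / T)))).add
      ((tendsto_one_sub_exp_neg_div.comp hκτ).const_mul ((δmax - δmin) * p₀))).sub
    ((tendsto_div_mul_Gser hT hε hκ hmin).sub
      (hexp.mul (tendsto_div_mul_Gser hT hε hκ (hmin.trans hlt))))
  convert hlim using 2 with τ
  · rw [Mavg, log_div (by positivity) (by positivity)]
    simp only [Function.comp_apply, neg_mul]
    ring
  · ring

/-- the average work tends to the adiabatic work `ε p₀` as `τ → 0⁺`. -/
theorem stmt4 (T δmin δmax κ p₀ : ℝ)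
    (hT : 0 < T) (hmin : 0 < δmin) (hlt : δmin < δmax) (hκ : 0 < κ)
    (hp₀ : p₀ ∈ Icc (0 : ℝ) 1) :
    Tendsto (fun τ => Mavg T δmin δmax κ p₀ τ) (nhdsWithin 0 (Ioi 0))
      (nhds ((δmax - δmin) * p₀)) :=
  stmt4_general T δmin δmax κ p₀ hT hmin hlt hκ
end

section
/- The average-work function M(τ) satisfies lim_{τ → ∞} M(τ) = T ln(Z_T(δ_min)/Z_T(δ_max)), the work output of the corresponding isothermal reversible process. -/
/-!
The correction terms of `M(τ)` are `1/τ` times a quantity that stays bounded: the series `G_τ(u)`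
is dominated, uniformly in `τ`, by the geometric series in `exp(-u/T) < 1`, because every
denominator `nε/(κτT) + 1` is at least `1`.
-/

open Set Filter

lemma abs_tsum_neg_pow_succ_div_le {r : ℝ} (hr0 : 0 ≤ r) (hr1 : r < 1) {d : ℕ → ℝ}
    (hd : ∀ n, 1 ≤ d n) : |∑' n, (-r) ^ (n + 1) / d n| ≤ (1 - r)⁻¹ := by
  rw [← Real.norm_eq_abs]
  refine tsum_of_norm_bounded (hasSum_geometric_of_lt_one hr0 hr1) fun n => ?_
  rw [Real.norm_eq_abs, abs_div, abs_pow, abs_neg, abs_of_nonneg hr0,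
    abs_of_pos (one_pos.trans_le (hd n))]
  calc r ^ (n + 1) / d n ≤ r ^ (n + 1) := div_le_self (by positivity) (hd n)
    _ ≤ r ^ n := pow_le_pow_of_le_one hr0 hr1.le n.le_succ

lemma abs_Gser_le {T ε κ τ u : ℝ} (hu : 0 < u / T) (hε : 0 ≤ ε / (κ * τ * T)) :
    |Gser T ε κ τ u| ≤ (1 - Real.exp (-u / T))⁻¹ := by
  rw [Gser, abs_neg]
  refine abs_tsum_neg_pow_succ_div_le (Real.exp_nonneg _) ?_ fun n => ?_
  · rw [Real.exp_lt_one_iff, neg_div]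
    exact neg_neg_of_pos hu
  · rw [mul_div_assoc]
    nlinarith [n.cast_nonneg (α := ℝ)]

lemma abs_mul_one_sub_sub_mul_le {x : ℝ} (hx0 : 0 ≤ x) (hx1 : x ≤ 1) (p a b : ℝ) :
    |p * (1 - x) - (a - x * b)| ≤ |p| + |a| + |b| := by
  have h1x : |1 - x| ≤ 1 := abs_le.2 ⟨by linarith, by linarith⟩
  have hx : |x| ≤ 1 := abs_le.2 ⟨by linarith, hx1⟩
  calc |p * (1 - x) - (a - x * b)| ≤ |p| * |1 - x| + (|a| + |x| * |b|) := by
        rw [← abs_mul, ← abs_mul]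
        exact (abs_sub _ _).trans (add_le_add le_rfl (abs_sub _ _))
    _ ≤ |p| + |a| + |b| := by
        nlinarith [mul_le_of_le_one_right (abs_nonneg p) h1x,
          mul_le_of_le_one_left (abs_nonneg b) hx]

lemma Mavg_eq (T δmin δmax κ p₀ τ : ℝ) :
    Mavg T δmin δmax κ p₀ τ =
      T * Real.log ((1 + Real.exp (-δmin / T)) / (1 + Real.exp (-δmax / T)))
        + τ⁻¹ * ((δmax - δmin) / κ * (p₀ * (1 - Real.exp (-κ * τ)) -
          (Gser T (δmax - δmin) κ τ δmin - Real.exp (-κ * τ) * Gser T (δmax - δmin) κ τ δmax))) := by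
  unfold Mavg
  ring

theorem stmt5_general (T δmin δmax κ p₀ : ℝ)
    (hT : 0 < T) (hmin : 0 < δmin) (hlt : δmin < δmax) (hκ : 0 < κ) :
    Tendsto (fun τ => Mavg T δmin δmax κ p₀ τ) atTop
      (nhds (T * Real.log ((1 + Real.exp (-δmin / T)) / (1 + Real.exp (-δmax / T))))) := by
  have hε : 0 < δmax - δmin := sub_pos.2 hlt
  have hG : ∀ u, 0 < u → ∀ τ, 0 ≤ τ →
      |Gser T (δmax - δmin) κ τ u| ≤ (1 - Real.exp (-u / T))⁻¹ := fun u hu τ hτ =>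
    abs_Gser_le (div_pos hu hT) (by positivity)
  have hbounded : IsBoundedUnder (· ≤ ·) atTop fun τ => ‖(δmax - δmin) / κ *
      (p₀ * (1 - Real.exp (-κ * τ)) -
        (Gser T (δmax - δmin) κ τ δmin - Real.exp (-κ * τ) * Gser T (δmax - δmin) κ τ δmax))‖ := by
    refine isBoundedUnder_of_eventually_le (a := (δmax - δmin) / κ *
      (|p₀| + (1 - Real.exp (-δmin / T))⁻¹ + (1 - Real.exp (-δmax / T))⁻¹)) ?_
    filter_upwards [eventually_ge_atTop 0] with τ hτ
    have hexp : Real.exp (-κ * τ) ≤ 1 := Real.exp_le_one_iff.2 (by nlinarith)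
    rw [norm_mul, Real.norm_eq_abs, abs_of_pos (div_pos hε hκ), Real.norm_eq_abs]
    gcongr
    refine (abs_mul_one_sub_sub_mul_le (Real.exp_nonneg _) hexp _ _ _).trans ?_
    gcongr
    · exact hG δmin hmin τ hτ
    · exact hG δmax (hmin.trans hlt) τ hτ
  simp_rw [Mavg_eq]
  simpa using tendsto_const_nhds.add (tendsto_inv_atTop_zero.zero_mul_isBoundedUnder_le hbounded)

/-- the average work tends to the isothermal work
`T ln(Z(δmin)/Z(δmax))` as `τ → ∞`. -/
theorem stmt5 (T δmin δmax κ p₀ : ℝ)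
    (hT : 0 < T) (hmin : 0 < δmin) (hlt : δmin < δmax) (hκ : 0 < κ)
    (hp₀ : p₀ ∈ Icc (0 : ℝ) 1) :
    Tendsto (fun τ => Mavg T δmin δmax κ p₀ τ) atTop
      (nhds (T * Real.log ((1 + Real.exp (-δmin / T)) / (1 + Real.exp (-δmax / T))))) :=
  stmt5_general T δmin δmax κ p₀ hT hmin hlt hκ
end

section
/- Under linear driving δ(t) = δ_max − (ε/τ)t with ε = δ_max − δ_min, one has exp(−κ ∫₀^τ (1 − γ_T(δ(t))) dt) = e^{−κτ} (Z_T(δ_min)/Z_T(δ_max))^{κτT/ε}, where the right-hand side uses the real power function. Consequently the continuous-time probability of maximal work is Pr[W = ε] = p₀ e^{−κτ} (Z_T(δ_min)/Z_T(δ_max))^{κτT/ε}. -/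
/-!
Under linear driving the dimensionless gap `δ(t)/T` is affine in `t`, and the integrand
`1 - γ_T(δ) = 1 - 1/(1 + e^{δ/T})` is the logistic function `σ(δ/T)`, whose antiderivative is the
softplus `log (1 + e^x)`. A linear change of variables therefore evaluates the integral in closed
form, and `log (1 + e^x) = x + log (1 + e^{-x})` converts softplus values into `log Z_T` values,
the `x`-terms producing the factor `e^{-κτ}`.
-/

namespace Real

lemma one_sub_one_div_one_add_exp (x : ℝ) : 1 - 1 / (1 + exp x) = sigmoid x := by
  rw [one_div, ← neg_neg x, ← sigmoid_def, neg_neg, sigmoid_neg, sub_sub_cancel]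

lemma log_one_add_exp (x : ℝ) : log (1 + exp x) = x + log (1 + exp (-x)) := by
  rw [← exp_eq_exp, exp_add, exp_log (by positivity), exp_log (by positivity), mul_add,
    ← exp_add, add_neg_cancel, exp_zero, mul_one, add_comm]

lemma hasDerivAt_log_one_add_exp (x : ℝ) :
    HasDerivAt (fun x => log (1 + exp x)) (sigmoid x) x := by
  convert ((hasDerivAt_exp x).const_add 1).log (by positivity) using 1
  rw [← one_sub_one_div_one_add_exp]
  field_simp
  ring

lemma integral_sigmoid (a b : ℝ) :
    ∫ x in a..b, sigmoid x = log (1 + exp b) - log (1 + exp a) :=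
  intervalIntegral.integral_eq_sub_of_hasDerivAt (fun x _ => hasDerivAt_log_one_add_exp x)
    (continuous_sigmoid.intervalIntegrable a b)

end Real

open Real in
lemma integral_sigmoid_linear_driving (T δmin δmax τ : ℝ) (hT : T ≠ 0) (hτ : τ ≠ 0)
    (hlt : δmin ≠ δmax) :
    ∫ t in (0 : ℝ)..τ, (1 - 1 / (1 + exp ((δmax - (δmax - δmin) / τ * t) / T))) =
      τ - τ * T / (δmax - δmin) *
        log ((1 + exp (-δmin / T)) / (1 + exp (-δmax / T))) := by
  have hε : δmax - δmin ≠ 0 := sub_ne_zero.mpr hlt.symm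
  have hc : -((δmax - δmin) / τ / T) ≠ 0 := by simp [hε, hτ, hT]
  have hlin : ∀ t, (δmax - (δmax - δmin) / τ * t) / T =
      -((δmax - δmin) / τ / T) * t + δmax / T := fun t => by ring
  simp only [hlin, one_sub_one_div_one_add_exp]
  have hend : -((δmax - δmin) / τ / T) * τ + δmax / T = δmin / T := by field_simp; ring
  rw [intervalIntegral.integral_comp_mul_add _ hc, integral_sigmoid, mul_zero, zero_add, hend,
    log_one_add_exp (δmin / T), log_one_add_exp (δmax / T), smul_eq_mul,
    log_div (by positivity) (by positivity), neg_div, neg_div]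
  field_simp
  ring

open Set

theorem stmt9_general (T δmin δmax τ κ p₀ : ℝ)
    (hT : 0 < T) (hlt : δmin < δmax) (hτ : 0 < τ) :
    Real.exp (-(κ * ∫ t in (0 : ℝ)..τ,
        (1 - 1 / (1 + Real.exp ((δmax - (δmax - δmin) / τ * t) / T))))) =
      Real.exp (-κ * τ) *
        ((1 + Real.exp (-δmin / T)) / (1 + Real.exp (-δmax / T))) ^
          (κ * τ * T / (δmax - δmin)) ∧
    p₀ * Real.exp (-(κ * ∫ t in (0 : ℝ)..τ,
        (1 - 1 / (1 + Real.exp ((δmax - (δmax - δmin) / τ * t) / T))))) =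
      p₀ * Real.exp (-κ * τ) *
        ((1 + Real.exp (-δmin / T)) / (1 + Real.exp (-δmax / T))) ^
          (κ * τ * T / (δmax - δmin)) := by
  have hexp : Real.exp (-(κ * ∫ t in (0 : ℝ)..τ,
        (1 - 1 / (1 + Real.exp ((δmax - (δmax - δmin) / τ * t) / T))))) =
      Real.exp (-κ * τ) *
        ((1 + Real.exp (-δmin / T)) / (1 + Real.exp (-δmax / T))) ^
          (κ * τ * T / (δmax - δmin)) := by
    rw [integral_sigmoid_linear_driving T δmin δmax τ hT.ne' hτ.ne' hlt.ne,
      Real.rpow_def_of_pos (by positivity), ← Real.exp_add]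
    ring_nf
  exact ⟨hexp, by rw [hexp, ← mul_assoc]⟩

/-- under linear driving `δ(t) = δmax − (ε/τ) t` with `ε = δmax − δmin`,
`exp(−κ ∫₀^τ (1 − γ_T(δ(t))) dt) = e^{−κτ} (Z(δmin)/Z(δmax))^{κτT/ε}` (real power),
where `γ_T(δ) = 1/(1 + exp(δ/T))` and `Z(δ) = 1 + exp(−δ/T)`; consequently the
continuous-time probability of maximal work `W = ε` is
`p₀ e^{−κτ} (Z(δmin)/Z(δmax))^{κτT/ε}`. -/
theorem stmt9 (T δmin δmax τ κ p₀ : ℝ)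
    (hT : 0 < T) (hmin : 0 < δmin) (hlt : δmin < δmax) (hτ : 0 < τ) (hκ : 0 < κ)
    (hp₀ : p₀ ∈ Icc (0 : ℝ) 1) :
    Real.exp (-(κ * ∫ t in (0 : ℝ)..τ,
        (1 - 1 / (1 + Real.exp ((δmax - (δmax - δmin) / τ * t) / T))))) =
      Real.exp (-κ * τ) *
        ((1 + Real.exp (-δmin / T)) / (1 + Real.exp (-δmax / T))) ^
          (κ * τ * T / (δmax - δmin)) ∧
    p₀ * Real.exp (-(κ * ∫ t in (0 : ℝ)..τ,
        (1 - 1 / (1 + Real.exp ((δmax - (δmax - δmin) / τ * t) / T))))) =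
      p₀ * Real.exp (-κ * τ) *
        ((1 + Real.exp (-δmin / T)) / (1 + Real.exp (-δmax / T))) ^
          (κ * τ * T / (δmax - δmin)) :=
  stmt9_general T δmin δmax τ κ p₀ hT hlt hτ
end

section
/- Define the lower-bound function LB(τ) = (1 − p₀) R^{−κτT/ε} M(τ)² + p₀ e^{−κτ} R^{κτT/ε} (ε − M(τ))², where R = Z_T(δ_min)/Z_T(δ_max) and M(τ) is the average-work function. Then lim_{τ → ∞} LB(τ) = 0; hence the variance lower bound is saturated in the isothermal limit, where work extraction is fluctuation-free. -/
open Set Filter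

/-- The variance lower-bound function
`LB(τ) = (1 − p₀) R^{−κτT/ε} M(τ)² + p₀ e^{−κτ} R^{κτT/ε} (ε − M(τ))²`,
with `R = Z(δmin)/Z(δmax)`, `Z(δ) = 1 + exp(−δ/T)`, `ε = δmax − δmin`;
real exponents use the real power function. -/
noncomputable def LB (T δmin δmax κ p₀ τ : ℝ) : ℝ :=
  (1 - p₀) * ((1 + Real.exp (-δmin / T)) / (1 + Real.exp (-δmax / T))) ^
      (-(κ * τ * T / (δmax - δmin))) * (Mavg T δmin δmax κ p₀ τ) ^ 2
  + p₀ * Real.exp (-κ * τ) *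
      ((1 + Real.exp (-δmin / T)) / (1 + Real.exp (-δmax / T))) ^
        (κ * τ * T / (δmax - δmin)) *
      ((δmax - δmin) - Mavg T δmin δmax κ p₀ τ) ^ 2

/-- Bound on `|Gser|`. -/
lemma Gser_abs_le (T ε κ τ u : ℝ) (hT : 0 < T) (hu : 0 < u) (hε : 0 < ε)
    (hκ : 0 < κ) (hτ : 0 < τ) :
    |Gser T ε κ τ u| ≤ Real.exp (-u / T) / (1 - Real.exp (-u / T)) := by
  have hr0 : 0 < Real.exp (-u / T) := Real.exp_pos _
  have hr1 : Real.exp (-u / T) < 1 := by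
    rw [Real.exp_lt_one_iff]
    exact div_neg_of_neg_of_pos (neg_neg_of_pos hu) hT
  set r := Real.exp (-u / T)
  have hbound : ∀ n : ℕ,
      |(-r) ^ (n + 1) / ((n + 1 : ℝ) * ε / (κ * τ * T) + 1)| ≤ r ^ (n + 1) := by
    intro n
    have hd0 : (0:ℝ) ≤ (n + 1 : ℝ) * ε / (κ * τ * T) := by positivity
    have hd : (1:ℝ) ≤ (n + 1 : ℝ) * ε / (κ * τ * T) + 1 := by linarith
    have heq : |(-r) ^ (n + 1) / ((n + 1 : ℝ) * ε / (κ * τ * T) + 1)|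
        = r ^ (n + 1) / ((n + 1 : ℝ) * ε / (κ * τ * T) + 1) := by
      rw [abs_div, abs_pow, abs_neg, abs_of_pos hr0,
        abs_of_pos (lt_of_lt_of_le one_pos hd)]
    rw [heq]
    exact div_le_self (pow_nonneg hr0.le _) hd
  have hgeom : Summable (fun n : ℕ => r ^ (n + 1)) := by
    have := (summable_geometric_of_lt_one hr0.le hr1).mul_right r
    simpa [pow_succ] using this
  have habs : Summable (fun n : ℕ =>
      |(-r) ^ (n + 1) / ((n + 1 : ℝ) * ε / (κ * τ * T) + 1)|) :=
    Summable.of_nonneg_of_le (fun n => abs_nonneg _) hbound hgeom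
  have hnorm : Summable (fun n : ℕ =>
      ‖(-r) ^ (n + 1) / ((n + 1 : ℝ) * ε / (κ * τ * T) + 1)‖) := by
    simpa only [Real.norm_eq_abs] using habs
  have h2 : |∑' n : ℕ, (-r) ^ (n + 1) / ((n + 1 : ℝ) * ε / (κ * τ * T) + 1)|
      ≤ ∑' n : ℕ, |(-r) ^ (n + 1) / ((n + 1 : ℝ) * ε / (κ * τ * T) + 1)| := by
    simpa only [Real.norm_eq_abs] using norm_tsum_le_tsum_norm hnorm
  have h3 : ∑' n : ℕ, |(-r) ^ (n + 1) / ((n + 1 : ℝ) * ε / (κ * τ * T) + 1)|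
      ≤ ∑' n : ℕ, r ^ (n + 1) := Summable.tsum_le_tsum hbound habs hgeom
  have h4 : ∑' n : ℕ, r ^ (n + 1) = r / (1 - r) := by
    have heq : (fun n : ℕ => r ^ (n + 1)) = fun n : ℕ => r ^ n * r := by
      funext n; rw [pow_succ]
    rw [heq, tsum_mul_right, tsum_geometric_of_lt_one hr0.le hr1,
      inv_mul_eq_div]
  have h1 : |Gser T ε κ τ u|
      = |∑' n : ℕ, (-r) ^ (n + 1) / ((n + 1 : ℝ) * ε / (κ * τ * T) + 1)| := by
    rw [Gser, abs_neg]
  rw [h1]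
  exact h2.trans (h3.trans_eq h4)

set_option maxHeartbeats 800000 in
/-- `LB(τ) → 0` as `τ → ∞`: the variance lower bound is saturated in
the isothermal limit, where work extraction is fluctuation-free. -/
theorem stmt12 (T δmin δmax κ p₀ : ℝ)
    (hT : 0 < T) (hmin : 0 < δmin) (hlt : δmin < δmax) (hκ : 0 < κ)
    (hp₀ : p₀ ∈ Icc (0 : ℝ) 1) :
    Tendsto (fun τ => LB T δmin δmax κ p₀ τ) atTop (nhds 0) := by
  have hmax : 0 < δmax := hmin.trans hlt
  obtain ⟨r₁, hr₁⟩ : ∃ r₁, r₁ = Real.exp (-δmin / T) := ⟨_, rfl⟩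
  obtain ⟨r₂, hr₂⟩ : ∃ r₂, r₂ = Real.exp (-δmax / T) := ⟨_, rfl⟩
  have hr₁0 : 0 < r₁ := hr₁ ▸ Real.exp_pos _
  have hr₂0 : 0 < r₂ := hr₂ ▸ Real.exp_pos _
  have hr₁1 : r₁ < 1 := by
    rw [hr₁, Real.exp_lt_one_iff]
    exact div_neg_of_neg_of_pos (neg_neg_of_pos hmin) hT
  have hr₂1 : r₂ < 1 := by
    rw [hr₂, Real.exp_lt_one_iff]
    exact div_neg_of_neg_of_pos (neg_neg_of_pos hmax) hT
  have hr21 : r₂ < r₁ := by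
    rw [hr₁, hr₂]
    exact Real.exp_lt_exp.mpr (div_lt_div_of_pos_right (by linarith) hT)
  have hε : (0:ℝ) < δmax - δmin := by linarith
  obtain ⟨R, hR⟩ : ∃ R : ℝ, R = (1 + r₁) / (1 + r₂) := ⟨_, rfl⟩
  have hRpos : 0 < R := by rw [hR]; positivity
  have hR1 : 1 < R := by
    rw [hR, lt_div_iff₀ (by linarith)]
    linarith
  have hlogR : 0 < Real.log R := Real.log_pos hR1
  -- T * log R < δmax - δmin
  have hLε : T * Real.log R < δmax - δmin := by
    have hRlt : R < r₁ / r₂ := by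
      rw [hR, div_lt_div_iff₀ (by linarith) hr₂0]
      nlinarith
    have hlog : Real.log R < Real.log (r₁ / r₂) :=
      Real.log_lt_log hRpos hRlt
    have hlogval : Real.log (r₁ / r₂) = (δmax - δmin) / T := by
      rw [Real.log_div (ne_of_gt hr₁0) (ne_of_gt hr₂0), hr₁, hr₂,
        Real.log_exp, Real.log_exp]
      ring
    rw [hlogval] at hlog
    calc T * Real.log R < T * ((δmax - δmin) / T) :=
          mul_lt_mul_of_pos_left hlog hT
      _ = δmax - δmin := by field_simp
  obtain ⟨L, hL⟩ : ∃ L : ℝ, L = T * Real.log R := ⟨_, rfl⟩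
  -- Mavg tends to L
  have hM : Tendsto (fun τ => Mavg T δmin δmax κ p₀ τ) atTop (nhds L) := by
    have hdiff : Tendsto (fun τ => Mavg T δmin δmax κ p₀ τ - L) atTop (nhds 0) := by
      obtain ⟨C₁, hC₁⟩ : ∃ C₁ : ℝ, C₁ = r₁ / (1 - r₁) := ⟨_, rfl⟩
      obtain ⟨C₂, hC₂⟩ : ∃ C₂ : ℝ, C₂ = r₂ / (1 - r₂) := ⟨_, rfl⟩
      have hC₁0 : 0 ≤ C₁ := by rw [hC₁]; exact div_nonneg hr₁0.le (by linarith)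
      have hC₂0 : 0 ≤ C₂ := by rw [hC₂]; exact div_nonneg hr₂0.le (by linarith)
      obtain ⟨K, hK⟩ : ∃ K : ℝ, K = (δmax - δmin) * (p₀ + C₁ + C₂) / κ := ⟨_, rfl⟩
      apply squeeze_zero_norm' (a := fun τ => K / τ)
      · filter_upwards [eventually_gt_atTop (0:ℝ)] with τ hτ
        have hκτ : 0 < κ * τ := mul_pos hκ hτ
        obtain ⟨G₁, hG₁⟩ : ∃ G₁ : ℝ, G₁ = Gser T (δmax - δmin) κ τ δmin := ⟨_, rfl⟩
        obtain ⟨G₂, hG₂⟩ : ∃ G₂ : ℝ, G₂ = Gser T (δmax - δmin) κ τ δmax := ⟨_, rfl⟩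
        have hbG₁ : |G₁| ≤ C₁ := by
          rw [hG₁, hC₁, hr₁]; exact Gser_abs_le T _ κ τ δmin hT hmin hε hκ hτ
        have hbG₂ : |G₂| ≤ C₂ := by
          rw [hG₂, hC₂, hr₂]; exact Gser_abs_le T _ κ τ δmax hT hmax hε hκ hτ
        obtain ⟨hG₁l, hG₁u⟩ := abs_le.mp hbG₁
        obtain ⟨hG₂l, hG₂u⟩ := abs_le.mp hbG₂
        obtain ⟨e, he⟩ : ∃ e : ℝ, e = Real.exp (-κ * τ) := ⟨_, rfl⟩
        have he0 : 0 < e := he ▸ Real.exp_pos _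
        have he1 : e ≤ 1 := by
          rw [he]
          exact Real.exp_le_one_iff.mpr (by nlinarith)
        obtain ⟨a, ha⟩ : ∃ a : ℝ, a = (δmax - δmin) / (κ * τ) := ⟨_, rfl⟩
        have ha0 : 0 < a := by rw [ha]; positivity
        have heq : Mavg T δmin δmax κ p₀ τ - L
            = a * p₀ * (1 - e) - a * (G₁ - e * G₂) := by
          rw [Mavg, hL, hR, hr₁, hr₂, ha, he, hG₁, hG₂]; ring
        have hKτ : K / τ = a * (p₀ + C₁ + C₂) := by
          rw [hK, ha]
          field_simp
        rw [Real.norm_eq_abs, heq, hKτ, abs_le]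
        constructor
        · nlinarith [mul_nonneg (mul_nonneg ha0.le hp₀.1) (sub_nonneg.mpr he1),
            mul_nonneg ha0.le hp₀.1,
            mul_nonneg ha0.le (sub_nonneg.mpr hG₁u),
            mul_nonneg (mul_nonneg ha0.le he0.le) (by linarith : (0:ℝ) ≤ C₂ + G₂),
            mul_nonneg (mul_nonneg ha0.le hC₂0) (sub_nonneg.mpr he1)]
        · nlinarith [mul_nonneg (mul_nonneg ha0.le hp₀.1) he0.le,
            mul_nonneg ha0.le hp₀.1,
            mul_nonneg ha0.le (by linarith : (0:ℝ) ≤ C₁ + G₁),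
            mul_nonneg (mul_nonneg ha0.le he0.le) (sub_nonneg.mpr hG₂u),
            mul_nonneg (mul_nonneg ha0.le hC₂0) (sub_nonneg.mpr he1)]
      · have h := tendsto_inv_atTop_zero.const_mul (K : ℝ)
        simpa [div_eq_mul_inv] using h
    have h := hdiff.add_const L
    simpa using h
  -- exponential rates
  obtain ⟨c₁, hc₁⟩ : ∃ c₁ : ℝ, c₁ = -(κ * T * Real.log R / (δmax - δmin)) := ⟨_, rfl⟩
  obtain ⟨c₂, hc₂⟩ : ∃ c₂ : ℝ, c₂ = κ * (T * Real.log R / (δmax - δmin) - 1) := ⟨_, rfl⟩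
  have hc₁0 : c₁ < 0 := by
    rw [hc₁, neg_lt_zero]; positivity
  have hc₂0 : c₂ < 0 := by
    rw [hc₂]
    apply mul_neg_of_pos_of_neg hκ
    rw [sub_neg, div_lt_one hε]
    exact hLε
  have hA : Tendsto (fun τ : ℝ => Real.exp (c₁ * τ)) atTop (nhds 0) :=
    Real.tendsto_exp_atBot.comp ((tendsto_const_mul_atBot_of_neg hc₁0).mpr tendsto_id)
  have hB : Tendsto (fun τ : ℝ => Real.exp (c₂ * τ)) atTop (nhds 0) :=
    Real.tendsto_exp_atBot.comp ((tendsto_const_mul_atBot_of_neg hc₂0).mpr tendsto_id)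
  -- rewrite LB
  have hLB : ∀ τ : ℝ, LB T δmin δmax κ p₀ τ
      = (1 - p₀) * Real.exp (c₁ * τ) * (Mavg T δmin δmax κ p₀ τ) ^ 2
        + p₀ * Real.exp (c₂ * τ) * ((δmax - δmin) - Mavg T δmin δmax κ p₀ τ) ^ 2 := by
    intro τ
    have hRpos' : (0:ℝ) < (1 + Real.exp (-δmin / T)) / (1 + Real.exp (-δmax / T)) := by
      rw [← hr₁, ← hr₂, ← hR]; exact hRpos
    have e1 : ((1 + Real.exp (-δmin / T)) / (1 + Real.exp (-δmax / T)) : ℝ)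
        ^ (-(κ * τ * T / (δmax - δmin))) = Real.exp (c₁ * τ) := by
      rw [Real.rpow_def_of_pos hRpos']
      congr 1
      rw [← hr₁, ← hr₂, ← hR, hc₁]
      ring
    have e2 : Real.exp (-κ * τ) * ((1 + Real.exp (-δmin / T)) / (1 + Real.exp (-δmax / T)) : ℝ)
        ^ (κ * τ * T / (δmax - δmin)) = Real.exp (c₂ * τ) := by
      rw [Real.rpow_def_of_pos hRpos', ← Real.exp_add]
      congr 1
      rw [← hr₁, ← hr₂, ← hR, hc₂]
      field_simp
      ring
    rw [LB, e1, mul_assoc p₀, e2]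
  rw [show (fun τ => LB T δmin δmax κ p₀ τ)
      = fun τ => (1 - p₀) * Real.exp (c₁ * τ) * (Mavg T δmin δmax κ p₀ τ) ^ 2
        + p₀ * Real.exp (c₂ * τ) * ((δmax - δmin) - Mavg T δmin δmax κ p₀ τ) ^ 2
    from funext hLB]
  have h0 : (1 - p₀) * 0 * L ^ 2 + p₀ * 0 * ((δmax - δmin) - L) ^ 2 = (0:ℝ) := by ring
  rw [← h0]
  exact (((tendsto_const_nhds (x := (1 - p₀ : ℝ))).mul hA).mul (hM.pow 2)).add
    (((tendsto_const_nhds (x := p₀)).mul hB).mul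
      (((tendsto_const_nhds (x := (δmax - δmin : ℝ))).sub hM).pow 2))
end

section
/- Let T > 0 and a > 0, and define g(u) = −∑_{n=1}^∞ (−u)^n / (n/a + 1) for u ∈ (0, 1). Then g is strictly increasing on (0, 1). Consequently, under the linear decreasing driving δ(t) = δ_max − (ε/τ)t, the function G(t) = −∑_{n=1}^∞ (−exp(−δ(t)/T))^n / (nε/(κτT) + 1) is strictly increasing in t on [0, τ]. -/
/-!
Writing `1 / ((n + 1) / a + 1) = ∫₀¹ x ^ ((n + 1) / a) dx` and summing the geometric series
under the integral gives `g(u) = ∫₀¹ u x^{1/a} / (1 + u x^{1/a}) dx`, whose integrand is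
increasing in `u` because `y ↦ y / (1 + y)` is. The function `G` is `g` with `a = κτT/ε`
composed with `t ↦ exp(-δ(t)/T)`, which is strictly increasing and maps `[0, τ]` into `(0, 1)`
since `δ` decreases from `δmax` to `δmin > 0`.
-/

open Set MeasureTheory intervalIntegral
open scoped Interval

theorem integral_rpow_zero_one {r : ℝ} (hr : -1 < r) : ∫ x in (0:ℝ)..1, x ^ r = (r + 1)⁻¹ := by
  rw [integral_rpow (Or.inl hr), Real.one_rpow, Real.zero_rpow (by linarith), sub_zero, one_div]

theorem hasSum_neg_pow_succ_div {p u : ℝ} (hp : 0 ≤ p) (hu : |u| < 1) :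
    HasSum (fun n : ℕ => (-u) ^ (n + 1) / ((n + 1 : ℝ) * p + 1))
      (-∫ x in (0:ℝ)..1, u * x ^ p / (1 + u * x ^ p)) := by
  have hbound : ∀ x ∈ Ι (0:ℝ) 1, |u * x ^ p| ≤ |u| := fun x hx => by
    rw [uIoc_of_le zero_le_one] at hx
    rw [abs_mul, abs_of_nonneg (Real.rpow_nonneg hx.1.le p)]
    exact mul_le_of_le_one_right (abs_nonneg u) (Real.rpow_le_one hx.1.le hx.2 hp)
  have hterm (n : ℕ) : ∫ x in (0:ℝ)..1, (-(u * x ^ p)) ^ (n + 1)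
      = (-u) ^ (n + 1) / ((n + 1 : ℝ) * p + 1) := by
    have hpow : EqOn (fun x : ℝ => (-(u * x ^ p)) ^ (n + 1))
        (fun x => (-u) ^ (n + 1) * x ^ ((n + 1 : ℝ) * p)) (uIcc 0 1) := fun x hx => by
      rw [uIcc_of_le zero_le_one] at hx
      dsimp only
      rw [neg_mul_eq_neg_mul, mul_pow, mul_comm _ p, Real.rpow_mul hx.1]
      norm_cast
    have hexp : -1 < (n + 1 : ℝ) * p := neg_one_lt_zero.trans_le (by positivity)
    rw [integral_congr hpow, intervalIntegral.integral_const_mul, integral_rpow_zero_one hexp,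
      div_eq_mul_inv]
  simp_rw [← hterm, ← intervalIntegral.integral_neg]
  refine hasSum_integral_of_dominated_convergence (fun n _ => |u| ^ (n + 1))
    (fun n => ?_) (fun n => ?_) ?_ intervalIntegrable_const ?_
  · exact (by fun_prop : Continuous fun x : ℝ => (-(u * x ^ p)) ^ (n + 1)).aestronglyMeasurable
  · refine ae_of_all _ fun x hx => ?_
    rw [norm_pow, norm_neg, Real.norm_eq_abs]
    exact pow_le_pow_left₀ (abs_nonneg _) (hbound x hx) _
  · exact ae_of_all _ fun _ _ =>
      (summable_nat_add_iff 1).2 (summable_geometric_of_lt_one (abs_nonneg u) hu)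
  · refine ae_of_all _ fun x hx => ?_
    have hy : |-(u * x ^ p)| < 1 := by rw [abs_neg]; exact (hbound x hx).trans_lt hu
    have h := (hasSum_geometric_of_abs_lt_one hy).mul_left (-(u * x ^ p))
    simp only [← pow_succ'] at h
    rwa [sub_neg_eq_add, neg_mul, ← div_eq_mul_inv] at h

theorem strictMonoOn_div_one_add : StrictMonoOn (fun y : ℝ => y / (1 + y)) (Ici 0) := by
  intro y hy z hz hyz
  rw [mem_Ici] at hy hz
  rw [div_lt_div_iff₀ (by positivity) (by positivity)]
  linarith

theorem strictMonoOn_integral_mul_rpow_div_one_add {p : ℝ} (hp : 0 ≤ p) :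
    StrictMonoOn (fun u : ℝ => ∫ x in (0:ℝ)..1, u * x ^ p / (1 + u * x ^ p)) (Ici 0) := by
  intro u hu v hv huv
  have hcont : ∀ w ∈ Ici (0:ℝ),
      ContinuousOn (fun x : ℝ => w * x ^ p / (1 + w * x ^ p)) (Icc 0 1) := fun w hw => by
    refine ContinuousOn.div (by fun_prop) (by fun_prop) fun x hx => ?_
    have := mul_nonneg (mem_Ici.1 hw) (Real.rpow_nonneg hx.1 p)
    positivity
  refine integral_lt_integral_of_continuousOn_of_le_of_exists_lt zero_lt_one (hcont u hu)
    (hcont v hv) (fun x hx => ?_) ⟨1, right_mem_Icc.2 zero_le_one, ?_⟩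
  · have hxp : 0 ≤ x ^ p := Real.rpow_nonneg hx.1.le p
    exact strictMonoOn_div_one_add.monotoneOn (mul_nonneg hu hxp) (mul_nonneg hv hxp)
      (mul_le_mul_of_nonneg_right huv.le hxp)
  · simpa only [Real.one_rpow, mul_one] using strictMonoOn_div_one_add hu hv huv

theorem strictMonoOn_neg_tsum_neg_pow_succ_div {a : ℝ} (ha : 0 < a) :
    StrictMonoOn (fun u : ℝ => -∑' n : ℕ, (-u) ^ (n + 1) / ((n + 1 : ℝ) / a + 1)) (Ioo 0 1) := by
  refine ((strictMonoOn_integral_mul_rpow_div_one_add (inv_nonneg.2 ha.le)).mono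
    (Ioo_subset_Ioi_self.trans Ioi_subset_Ici_self)).congr fun u hu => ?_
  have h := (hasSum_neg_pow_succ_div (inv_nonneg.2 ha.le)
    (abs_lt.2 ⟨by linarith [hu.1], hu.2⟩)).tsum_eq
  simp only [← div_eq_mul_inv] at h
  rw [h, neg_neg]

/-- for `T > 0` and `a > 0`, the function
`g(u) = −∑_{n=1}^∞ (−u)^n / (n/a + 1)` is strictly increasing on `(0, 1)`; consequently,
with the linear decreasing driving `δ(t) = δmax − (ε/τ) t` and `a = κτT/ε`, the function
`G(t) = −∑_{n=1}^∞ (−exp(−δ(t)/T))^n / (nε/(κτT) + 1)` is strictly increasing on `[0, τ]`. -/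
theorem stmt13 (T a δmin δmax τ κ : ℝ)
    (hT : 0 < T) (ha : 0 < a)
    (hmin : 0 < δmin) (hlt : δmin < δmax) (hτ : 0 < τ) (hκ : 0 < κ) :
    StrictMonoOn
      (fun u : ℝ => -∑' n : ℕ, (-u) ^ (n + 1) / ((n + 1 : ℝ) / a + 1))
      (Ioo 0 1) ∧
    StrictMonoOn
      (fun t : ℝ => -∑' n : ℕ,
        (-Real.exp (-(δmax - (δmax - δmin) / τ * t) / T)) ^ (n + 1) /
          ((n + 1 : ℝ) * (δmax - δmin) / (κ * τ * T) + 1))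
      (Icc 0 τ) := by
  refine ⟨strictMonoOn_neg_tsum_neg_pow_succ_div ha, ?_⟩
  have hε : 0 < δmax - δmin := sub_pos.2 hlt
  have hrate : ∀ n : ℕ, (n + 1 : ℝ) * (δmax - δmin) / (κ * τ * T)
      = (n + 1) / (κ * τ * T / (δmax - δmin)) := fun n => (div_div_eq_mul_div _ _ _).symm
  simp_rw [hrate]
  have hexponent : StrictMono fun t => -(δmax - (δmax - δmin) / τ * t) / T := fun x y hxy => by
    have := mul_lt_mul_of_pos_left hxy (div_pos hε hτ)
    exact div_lt_div_of_pos_right (by linarith) hT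
  refine StrictMonoOn.comp (f := fun t => Real.exp (-(δmax - (δmax - δmin) / τ * t) / T))
    (strictMonoOn_neg_tsum_neg_pow_succ_div (by positivity))
    ((Real.exp_strictMono.comp hexponent).strictMonoOn _) fun t ht => ?_
  have hδ : (δmax - δmin) / τ * t ≤ δmax - δmin := by
    simpa only [div_mul_cancel₀ _ hτ.ne'] using mul_le_mul_of_nonneg_left ht.2 (div_pos hε hτ).le
  exact ⟨Real.exp_pos _, Real.exp_lt_one_iff.2 (div_neg_of_neg_of_pos (by linarith) hT)⟩
end

section
/- Let T_h > T_c > 0 and δ_a, δ_b > 0, and set δ_c = (T_c/T_h) δ_b, δ_d = (T_c/T_h) δ_a, p_a = 1/(1 + e^{δ_a/T_h}), p_b = 1/(1 + e^{δ_b/T_h}), Z(δ) = 1 + e^{−δ/T_h}. Then the expectation of the four-point Carnot work distribution, which takes the values (T_h − T_c) ln(Z(δ_b)/Z(δ_a)), (T_h − T_c) ln(Z(δ_b)/Z(δ_a)) − (δ_a − δ_d), (T_h − T_c) ln(Z(δ_b)/Z(δ_a)) + (δ_b − δ_c), and (T_h − T_c) ln(Z(δ_b)/Z(δ_a)) + (δ_b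 − δ_c − δ_a + δ_d) with respective probabilities (1 − p_a)(1 − p_b), (1 − p_b) p_a, (1 − p_a) p_b, and p_a p_b, equals (1 − T_c/T_h) (T_h ln(Z(δ_b)/Z(δ_a)) + δ_b p_b − δ_a p_a). -/
/-- the expectation of the four-point work distribution of the microscopic
two-level Carnot cycle equals `(1 − T_c/T_h)(T_h ln(Z(δ_b)/Z(δ_a)) + δ_b p_b − δ_a p_a)`,
where `δ_c = (T_c/T_h) δ_b`, `δ_d = (T_c/T_h) δ_a`, `p_x = 1/(1 + e^{δ_x/T_h})`,
`Z(δ) = 1 + e^{−δ/T_h}`. -/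
theorem stmt14 (Th Tc δa δb δc δd pa pb W0 : ℝ)
    (hTh : Tc < Th) (hTc : 0 < Tc) (ha : 0 < δa) (hb : 0 < δb)
    (hδc : δc = Tc / Th * δb) (hδd : δd = Tc / Th * δa)
    (hpa : pa = 1 / (1 + Real.exp (δa / Th)))
    (hpb : pb = 1 / (1 + Real.exp (δb / Th)))
    (hW0 : W0 = (Th - Tc) *
      Real.log ((1 + Real.exp (-δb / Th)) / (1 + Real.exp (-δa / Th)))) :
    (1 - pa) * (1 - pb) * W0
      + (1 - pb) * pa * (W0 - (δa - δd))
      + (1 - pa) * pb * (W0 + (δb - δc))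
      + pa * pb * (W0 + (δb - δc - δa + δd)) =
    (1 - Tc / Th) *
      (Th * Real.log ((1 + Real.exp (-δb / Th)) / (1 + Real.exp (-δa / Th)))
        + δb * pb - δa * pa) := by
  have hTh0 : Th ≠ 0 := (hTc.trans hTh).ne'
  subst hδc hδd hW0
  field_simp
  ring
end

section
/- Define f : ℝ → ℝ by f(x) = (1 + e^{−x}) exp(x/(1 + e^x)). Then for every x, f is differentiable at x with f'(x) = −(x/(1 + e^x)) exp(x/(1 + e^x)); in particular f'(x) < 0 for all x > 0, so f is strictly decreasing on (0, ∞). -/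
/-!
Writing `u x = x / (1 + eˣ)`, the two terms of the product rule combine because
`d/dx (1 + e⁻ˣ) = -e⁻ˣ` and `(1 + e⁻ˣ) u' x = e⁻ˣ - x / (1 + eˣ)`, so the `e⁻ˣ` cancels and
`f' = -u · eᵘ`, which is negative exactly when `x > 0`.
-/

open Set Real

lemma hasDerivAt_div_one_add_exp (x : ℝ) :
    HasDerivAt (fun x : ℝ => x / (1 + exp x))
      ((1 + exp x - x * exp x) / (1 + exp x) ^ 2) x := by
  have h := (hasDerivAt_id x).div ((hasDerivAt_const x 1).add (hasDerivAt_exp x))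
    (by positivity : 1 + exp x ≠ 0)
  exact h.congr_deriv (by simp only [id, one_mul, zero_add, Pi.add_apply])

lemma hasDerivAt_one_add_exp_neg (x : ℝ) :
    HasDerivAt (fun x : ℝ => 1 + exp (-x)) (-exp (-x)) x := by
  simpa using ((hasDerivAt_neg x).exp).const_add 1

lemma hasDerivAt_one_add_exp_neg_mul_exp_div (x : ℝ) :
    HasDerivAt (fun x : ℝ => (1 + exp (-x)) * exp (x / (1 + exp x)))
      (-(x / (1 + exp x)) * exp (x / (1 + exp x))) x := by
  refine ((hasDerivAt_one_add_exp_neg x).mul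
    (hasDerivAt_div_one_add_exp x).exp).congr_deriv ?_
  have : 1 + exp x ≠ 0 := by positivity
  rw [exp_neg]
  field_simp
  ring

lemma neg_div_one_add_exp_mul_exp_neg {x : ℝ} (hx : 0 < x) :
    -(x / (1 + exp x)) * exp (x / (1 + exp x)) < 0 :=
  mul_neg_of_neg_of_pos (neg_neg_of_pos (by positivity)) (exp_pos _)

/-- `f(x) = (1 + e^{−x}) exp(x/(1 + e^x))` is everywhere differentiable
with `f'(x) = −(x/(1 + e^x)) exp(x/(1 + e^x))`; in particular `f'(x) < 0` for `x > 0`,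
so `f` is strictly decreasing on `(0, ∞)`. -/
theorem stmt16 :
    (∀ x : ℝ, HasDerivAt
      (fun x : ℝ => (1 + Real.exp (-x)) * Real.exp (x / (1 + Real.exp x)))
      (-(x / (1 + Real.exp x)) * Real.exp (x / (1 + Real.exp x))) x) ∧
    (∀ x : ℝ, 0 < x →
      -(x / (1 + Real.exp x)) * Real.exp (x / (1 + Real.exp x)) < 0) ∧
    StrictAntiOn
      (fun x : ℝ => (1 + Real.exp (-x)) * Real.exp (x / (1 + Real.exp x)))
      (Ioi 0) := by
  refine ⟨hasDerivAt_one_add_exp_neg_mul_exp_div, fun x hx => neg_div_one_add_exp_mul_exp_neg hx,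
    ?_⟩
  refine strictAntiOn_of_hasDerivWithinAt_neg (convex_Ioi 0)
    (fun x _ => (hasDerivAt_one_add_exp_neg_mul_exp_div x).continuousAt.continuousWithinAt)
    (fun x _ => (hasDerivAt_one_add_exp_neg_mul_exp_div x).hasDerivWithinAt) ?_
  rw [interior_Ioi]
  exact fun x hx => neg_div_one_add_exp_mul_exp_neg hx
end

section
/- Let T_h > T_c > 0 and 0 < δ_min < δ_max, and define f(x) = (1 + e^{−x}) exp(x/(1 + e^x)) and μ(δ_a, δ_c) = (T_h − T_c)(ln f(δ_a/T_h) − ln f(δ_c/T_c)). Then for all δ_a, δ_c ∈ [δ_min, δ_max], μ(δ_max, δ_min) ≤ μ(δ_a, δ_c); that is, the Carnot cycle maximizing the average work output (minimizing μ, which is negative in the work-output convention) is the one with δ_a = δ_max and δ_c = δ_min. -/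
/-!
`log f(x) = log (1 + e^{-x}) + x / (1 + e^x)` is the entropy `S(x)` of a two-level Gibbs state
with gap-to-temperature ratio `x`, and `S'(x) = -x e^x / (1 + e^x)^2 ≤ 0` for `x ≥ 0`. Hence
`μ(δa, δc) = (T_h - T_c)(S(δa / T_h) - S(δc / T_c))` is smallest when `δa` is largest and `δc`
is smallest.
-/

open Set Real

noncomputable def twoLevelEntropy (x : ℝ) : ℝ :=
  log (1 + exp (-x)) + x / (1 + exp x)

lemma log_eq_twoLevelEntropy (x : ℝ) :
    log ((1 + exp (-x)) * exp (x / (1 + exp x))) = twoLevelEntropy x := by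
  rw [log_mul (by positivity) (exp_pos _).ne', log_exp, twoLevelEntropy]

lemma hasDerivAt_twoLevelEntropy (x : ℝ) :
    HasDerivAt twoLevelEntropy (-x * exp x / (1 + exp x) ^ 2) x := by
  have hlog : HasDerivAt (fun x => log (1 + exp (-x))) (-exp (-x) / (1 + exp (-x))) x := by
    have h := ((hasDerivAt_neg x).exp.const_add 1).log (by positivity)
    simpa [neg_div] using h
  have hquot : HasDerivAt (fun x => x / (1 + exp x))
      ((1 * (1 + exp x) - x * exp x) / (1 + exp x) ^ 2) x :=
    (hasDerivAt_id x).div ((hasDerivAt_exp x).const_add 1) (by positivity)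
  refine (hlog.add hquot).congr_deriv ?_
  rw [exp_neg]
  field_simp
  ring

lemma antitoneOn_twoLevelEntropy : AntitoneOn twoLevelEntropy (Ici 0) := by
  have hdiff : Differentiable ℝ twoLevelEntropy := fun x =>
    (hasDerivAt_twoLevelEntropy x).differentiableAt
  refine antitoneOn_of_deriv_nonpos (convex_Ici 0) hdiff.continuous.continuousOn
    hdiff.differentiableOn fun x hx => ?_
  rw [interior_Ici, mem_Ioi] at hx
  rw [(hasDerivAt_twoLevelEntropy x).deriv]
  exact div_nonpos_of_nonpos_of_nonneg
    (by nlinarith [exp_pos x]) (by positivity)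

theorem stmt17_general (Th Tc δmin δmax : ℝ)
    (hTh : Tc < Th) (hTc : 0 < Tc) (hmin : 0 < δmin)
    (f : ℝ → ℝ)
    (hf : ∀ x, f x = (1 + Real.exp (-x)) * Real.exp (x / (1 + Real.exp x)))
    (μ : ℝ → ℝ → ℝ)
    (hμ : ∀ δa δc, μ δa δc =
      (Th - Tc) * (Real.log (f (δa / Th)) - Real.log (f (δc / Tc)))) :
    ∀ δa ∈ Icc δmin δmax, ∀ δc ∈ Icc δmin δmax, μ δmax δmin ≤ μ δa δc := by
  intro δa ⟨hδa_min, hδa_max⟩ δc ⟨hδc_min, _⟩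
  have hTh_pos : 0 < Th := hTc.trans hTh
  have hδa : 0 < δa := hmin.trans_le hδa_min
  simp only [hμ, hf, log_eq_twoLevelEntropy]
  have hot : twoLevelEntropy (δmax / Th) ≤ twoLevelEntropy (δa / Th) :=
    antitoneOn_twoLevelEntropy (mem_Ici.2 (by positivity))
      (mem_Ici.2 (by positivity [hδa.trans_le hδa_max])) (by gcongr)
  have cold : twoLevelEntropy (δc / Tc) ≤ twoLevelEntropy (δmin / Tc) :=
    antitoneOn_twoLevelEntropy (mem_Ici.2 (by positivity))
      (mem_Ici.2 (by positivity [hmin.trans_le hδc_min])) (by gcongr)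
  exact mul_le_mul_of_nonneg_left (by linarith) (by linarith)

/-- with `f(x) = (1 + e^{−x}) exp(x/(1 + e^x))` and average Carnot work
`μ(δa, δc) = (T_h − T_c)(ln f(δa/T_h) − ln f(δc/T_c))`, for all `δa, δc ∈ [δmin, δmax]`
one has `μ(δmax, δmin) ≤ μ(δa, δc)`: the cycle maximizing the work output is the one
with `δa = δmax` and `δc = δmin`. -/
theorem stmt17 (Th Tc δmin δmax : ℝ)
    (hTh : Tc < Th) (hTc : 0 < Tc) (hmin : 0 < δmin) (hlt : δmin < δmax)
    (f : ℝ → ℝ)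
    (hf : ∀ x, f x = (1 + Real.exp (-x)) * Real.exp (x / (1 + Real.exp x)))
    (μ : ℝ → ℝ → ℝ)
    (hμ : ∀ δa δc, μ δa δc =
      (Th - Tc) * (Real.log (f (δa / Th)) - Real.log (f (δc / Tc)))) :
    ∀ δa ∈ Icc δmin δmax, ∀ δc ∈ Icc δmin δmax, μ δmax δmin ≤ μ δa δc :=
  stmt17_general Th Tc δmin δmax hTh hTc hmin f hf μ hμ
end

section
/- Let T > 0, let ε_1, …, ε_N be nonnegative reals, not all equal, and let k > 0. Define Z(c) = ∑_{i=1}^N e^{−c ε_i / T} and U(c) = (∑_{i=1}^N c ε_i e^{−c ε_i / T}) / Z(c). If the heat absorbed during the isothermal level-scaling process is positive, i.e. U(k) − U(1) > T (ln Z(1) − ln Z(k)), then k < 1. -/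
/-- for a system with nonnegative, not all equal, energy levels `ε i`
in a Gibbs state at temperature `T`, with partition function `Z(c) = ∑ i e^{−c ε i/T}`
and mean energy `U(c) = (∑ i c ε i e^{−c ε i/T}) / Z(c)`, if the heat absorbed while
scaling all levels by `k > 0` is positive, i.e. `U(k) − U(1) > T (ln Z(1) − ln Z(k))`,
then `k < 1`: an isothermal expansion compresses the energy gaps. -/
theorem stmt18 (T : ℝ) (hT : 0 < T) (N : ℕ) (ε : Fin N → ℝ)
    (hε : ∀ i, 0 ≤ ε i) (hne : ∃ i j, ε i ≠ ε j)
    (k : ℝ) (hk : 0 < k)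
    (Z U : ℝ → ℝ)
    (hZ : ∀ c, Z c = ∑ i, Real.exp (-c * ε i / T))
    (hU : ∀ c, U c = (∑ i, c * ε i * Real.exp (-c * ε i / T)) / Z c)
    (hQ : T * (Real.log (Z 1) - Real.log (Z k)) < U k - U 1) :
    k < 1 := by
  by_contra hcon
  push_neg at hcon
  obtain ⟨i0, j0, hij⟩ := hne
  have hNe : (Finset.univ : Finset (Fin N)).Nonempty := ⟨i0, Finset.mem_univ i0⟩
  set X : Fin N → ℝ := fun i => Real.exp (-k * ε i / T) with hX
  set Y : Fin N → ℝ := fun i => Real.exp (-1 * ε i / T) with hY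
  set Zk : ℝ := ∑ i, X i with hZk
  set Z1 : ℝ := ∑ i, Y i with hZ1
  set Ek : ℝ := ∑ i, ε i * X i with hEk
  set E1 : ℝ := ∑ i, ε i * Y i with hE1
  have hZkpos : 0 < Zk := Finset.sum_pos (fun i _ => Real.exp_pos _) hNe
  have hZ1pos : 0 < Z1 := Finset.sum_pos (fun i _ => Real.exp_pos _) hNe
  -- Step A: pairwise Chebyshev inequality
  have pairwise : ∀ i j : Fin N,
      ε i * X i * Y j + ε j * X j * Y i ≤ ε i * Y i * X j + ε j * Y j * X i := by
    intro i j
    have key : ∀ a b : ℝ, a ≤ b →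
        Real.exp (-1 * a / T) * Real.exp (-k * b / T)
          ≤ Real.exp (-k * a / T) * Real.exp (-1 * b / T) := by
      intro a b hab
      rw [← Real.exp_add, ← Real.exp_add, Real.exp_le_exp]
      have h1 : -1 * a / T + -k * b / T = (-a - k * b) / T := by ring
      have h2 : -k * a / T + -1 * b / T = (-k * a - b) / T := by ring
      rw [h1, h2]
      have hnum : -a - k * b ≤ -k * a - b := by
        nlinarith [mul_le_mul_of_nonneg_left hab (by linarith : (0:ℝ) ≤ k - 1)]
      exact (div_le_div_iff_of_pos_right hT).mpr hnum
    rcases le_total (ε i) (ε j) with h | h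
    · have := key (ε i) (ε j) h
      simp only [hX, hY]
      nlinarith [Real.exp_pos (-k * ε i / T), Real.exp_pos (-1 * ε j / T)]
    · have := key (ε j) (ε i) h
      simp only [hX, hY]
      nlinarith [Real.exp_pos (-k * ε j / T), Real.exp_pos (-1 * ε i / T)]
  have stepA : Ek * Z1 ≤ E1 * Zk := by
    have hsum : ∑ i, ∑ j, (ε i * X i * Y j + ε j * X j * Y i)
        ≤ ∑ i, ∑ j, (ε i * Y i * X j + ε j * Y j * X i) :=
      Finset.sum_le_sum fun i _ => Finset.sum_le_sum fun j _ => pairwise i j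
    have e1 : ∑ i, ∑ j, (ε i * X i * Y j + ε j * X j * Y i) = Ek * Z1 + Z1 * Ek := by
      rw [hEk, hZ1]
      rw [Finset.sum_mul_sum, Finset.sum_mul_sum]
      rw [← Finset.sum_add_distrib]
      refine Finset.sum_congr rfl fun i _ => ?_
      rw [← Finset.sum_add_distrib]
      refine Finset.sum_congr rfl fun j _ => ?_
      ring
    have e2 : ∑ i, ∑ j, (ε i * Y i * X j + ε j * Y j * X i) = E1 * Zk + Zk * E1 := by
      rw [hE1, hZk]
      rw [Finset.sum_mul_sum, Finset.sum_mul_sum]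
      rw [← Finset.sum_add_distrib]
      refine Finset.sum_congr rfl fun i _ => ?_
      rw [← Finset.sum_add_distrib]
      refine Finset.sum_congr rfl fun j _ => ?_
      ring
    rw [e1, e2] at hsum
    nlinarith [hsum]
  -- Step B: Gibbs inequality  Z1 ≥ Zk * exp m  with  m = (k-1) Ek / (T Zk)
  set m : ℝ := (k - 1) * Ek / (T * Zk) with hm
  have hBi : ∀ i : Fin N,
      Real.exp m * (X i * ((k - 1) * ε i / T - m + 1)) ≤ Y i := by
    intro i
    have h1 : (k - 1) * ε i / T - m + 1 ≤ Real.exp ((k - 1) * ε i / T - m) :=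
      Real.add_one_le_exp _
    have h2 : Real.exp m * (X i * ((k - 1) * ε i / T - m + 1))
        ≤ Real.exp m * (X i * Real.exp ((k - 1) * ε i / T - m)) := by
      simp only [hX]
      exact mul_le_mul_of_nonneg_left
        (mul_le_mul_of_nonneg_left h1 (Real.exp_pos (-k * ε i / T)).le)
        (Real.exp_pos m).le
    refine h2.trans (le_of_eq ?_)
    simp only [hX, hY, ← Real.exp_add]
    congr 1
    ring
  have hsumB : Real.exp m * Zk ≤ Z1 := by
    have hle : ∑ i, Real.exp m * (X i * ((k - 1) * ε i / T - m + 1)) ≤ Z1 :=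
      Finset.sum_le_sum fun i _ => hBi i
    have heq : ∑ i, Real.exp m * (X i * ((k - 1) * ε i / T - m + 1))
        = Real.exp m * ((k - 1) / T * Ek + (1 - m) * Zk) := by
      rw [← Finset.mul_sum]
      congr 1
      rw [hEk, hZk, Finset.mul_sum, Finset.mul_sum, ← Finset.sum_add_distrib]
      refine Finset.sum_congr rfl fun i _ => ?_
      ring
    have hmzk : m * Zk = (k - 1) * Ek / T := by
      rw [hm]
      field_simp
    have : (k - 1) / T * Ek + (1 - m) * Zk = Zk := by
      have : (k - 1) / T * Ek = m * Zk := by rw [hmzk]; ring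
      rw [this]; ring
    rw [heq, this] at hle
    exact hle
  have hlog : m + Real.log Zk ≤ Real.log Z1 := by
    have h1 : Real.log (Real.exp m * Zk) ≤ Real.log Z1 :=
      Real.log_le_log (by positivity) hsumB
    rwa [Real.log_mul (Real.exp_ne_zero m) (ne_of_gt hZkpos), Real.log_exp] at h1
  -- Assemble
  have hZkval : Z k = Zk := by rw [hZ k]
  have hZ1val : Z 1 = Z1 := by rw [hZ 1]
  have hUk : U k = k * Ek / Zk := by
    rw [hU k, hZkval, hEk, Finset.mul_sum]
    congr 1
    exact Finset.sum_congr rfl fun i _ => by ring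
  have hU1 : U 1 = E1 / Z1 := by
    rw [hU 1, hZ1val, hE1]
    congr 1
    exact Finset.sum_congr rfl fun i _ => by ring
  have hTm : T * m = (k - 1) * Ek / Zk := by
    rw [hm]; field_simp
  have hmean : Ek / Zk ≤ E1 / Z1 := by
    rw [div_le_div_iff₀ hZkpos hZ1pos]
    exact stepA
  have hfinal : U k - U 1 ≤ T * (Real.log Z1 - Real.log Zk) := by
    have h1 : T * m ≤ T * (Real.log Z1 - Real.log Zk) := by
      have := mul_le_mul_of_nonneg_left (by linarith : m ≤ Real.log Z1 - Real.log Zk) hT.le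
      linarith
    rw [hUk, hU1]
    have h2 : k * Ek / Zk - E1 / Z1 ≤ (k - 1) * Ek / Zk := by
      have : k * Ek / Zk = (k - 1) * Ek / Zk + Ek / Zk := by ring
      rw [this]
      linarith
    linarith [hTm ▸ h1]
  rw [hZkval, hZ1val] at hQ
  linarith
end
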